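/- Let n ≥ 2 and let F : ℝⁿ → ℝⁿ be a C¹ map. Suppose that for every x ∈ ℝⁿ no complex eigenvalue of JF(x) is zero, and that there exists ε > 0 such that for every x ∈ ℝⁿ every eigenvalue of the real symmetric matrix JF(x)+JF(x)^T is greater than ε. Then F is injective. -/

import Mathlib

/-!
Every eigenvalue of `JF(x) + JF(x)ᵀ` is positive, so this symmetric matrix is positive definite
and `v ⬝ᵥ JF(x) v > 0` for `v ≠ 0`. For `a ≠ b` the function `t ↦ (b - a) ⬝ᵥ F (a + t (b - a))`
therefore has positive derivative, hence is strictly increasing, and `F a ≠ F b`.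
-/

open Matrix

/-- The Jacobian matrix of a map `F : ℝⁿ → ℝⁿ` at a point `x`:
the matrix of the total (Fréchet) derivative of `F` at `x` in the standard basis. -/
noncomputable def jacobianMatrix {n : ℕ} (F : (Fin n → ℝ) → (Fin n → ℝ)) (x : Fin n → ℝ) :
    Matrix (Fin n) (Fin n) ℝ :=
  LinearMap.toMatrix' (fderiv ℝ F x).toLinearMap

/-- `μ : ℂ` is a (complex) eigenvalue of the real matrix `A`. -/
def HasComplexEigenvalue {n : ℕ} (A : Matrix (Fin n) (Fin n) ℝ) (μ : ℂ) : Prop :=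
  ∃ v : Fin n → ℂ, v ≠ 0 ∧ (A.map Complex.ofReal).mulVec v = μ • v

/-- `μ : ℝ` is a (real) eigenvalue of the real matrix `A`. -/
def HasRealEigenvalue {n : ℕ} (A : Matrix (Fin n) (Fin n) ℝ) (μ : ℝ) : Prop :=
  ∃ v : Fin n → ℝ, v ≠ 0 ∧ A.mulVec v = μ • v

theorem Matrix.IsHermitian.posDef_of_forall_hasRealEigenvalue_pos {n : ℕ}
    {S : Matrix (Fin n) (Fin n) ℝ} (hS : S.IsHermitian)
    (h : ∀ μ, HasRealEigenvalue S μ → 0 < μ) : S.PosDef :=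
  hS.posDef_iff_eigenvalues_pos.mpr fun i =>
    h _ ⟨_, by simpa using hS.eigenvectorBasis.orthonormal.ne_zero i, hS.mulVec_eigenvectorBasis i⟩

theorem Matrix.dotProduct_add_transpose_mulVec {ι R : Type*} [Fintype ι] [CommSemiring R]
    (A : Matrix ι ι R) (v : ι → R) : v ⬝ᵥ (A + Aᵀ) *ᵥ v = 2 * (v ⬝ᵥ A *ᵥ v) := by
  rw [add_mulVec, dotProduct_add, dotProduct_mulVec v Aᵀ, vecMul_transpose, dotProduct_comm,
    two_mul]

theorem jacobianMatrix_mulVec {n : ℕ} (F : (Fin n → ℝ) → (Fin n → ℝ)) (x v : Fin n → ℝ) :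
    jacobianMatrix F x *ᵥ v = fderiv ℝ F x v :=
  LinearMap.toMatrix'_mulVec _ v

theorem hasDerivAt_dotProduct_comp_line {ι : Type*} [Fintype ι] {F : (ι → ℝ) → (ι → ℝ)}
    (hF : Differentiable ℝ F) (a d : ι → ℝ) (t : ℝ) :
    HasDerivAt (fun t : ℝ => d ⬝ᵥ F (a + t • d)) (d ⬝ᵥ fderiv ℝ F (a + t • d) d) t := by
  have hline : HasDerivAt (fun t : ℝ => a + t • d) d t := by
    simpa using ((hasDerivAt_id t).smul_const d).const_add a
  exact (dotProductBilin ℝ ℝ d).toContinuousLinearMap.hasFDerivAt.comp_hasDerivAt t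
    ((hF _).hasFDerivAt.comp_hasDerivAt t hline)

theorem injective_of_dotProduct_fderiv_pos {ι : Type*} [Fintype ι] {F : (ι → ℝ) → (ι → ℝ)}
    (hF : Differentiable ℝ F) (hpos : ∀ x v, v ≠ 0 → 0 < v ⬝ᵥ fderiv ℝ F x v) :
    Function.Injective F := by
  intro a b hab
  by_contra hne
  have hd : b - a ≠ 0 := sub_ne_zero.mpr (Ne.symm hne)
  have hmono := strictMono_of_hasDerivAt_pos (hasDerivAt_dotProduct_comp_line hF a (b - a))
    fun t => hpos _ _ hd
  simpa [hab] using hmono zero_lt_one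

theorem injective_of_nonzero_spec_and_symmetric_spec_gt_general
    {n : ℕ} (F : (Fin n → ℝ) → (Fin n → ℝ)) (hF : ContDiff ℝ 1 F)
    (hsym : ∃ ε > (0 : ℝ), ∀ x : Fin n → ℝ, ∀ μ : ℝ,
        HasRealEigenvalue (jacobianMatrix F x + (jacobianMatrix F x)ᵀ) μ → ε < μ) :
    Function.Injective F := by
  obtain ⟨ε, hε, hsym⟩ := hsym
  refine injective_of_dotProduct_fderiv_pos (hF.differentiable one_ne_zero) fun x v hv => ?_
  have hherm : (jacobianMatrix F x + (jacobianMatrix F x)ᵀ).IsHermitian :=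
    isHermitian_iff_isSymm.mpr (isSymm_add_transpose_self _)
  have hpd := hherm.posDef_of_forall_hasRealEigenvalue_pos fun μ hμ => hε.trans (hsym x μ hμ)
  have hquad := hpd.dotProduct_mulVec_pos hv
  rw [star_trivial, dotProduct_add_transpose_mulVec, jacobianMatrix_mulVec] at hquad
  linarith

/-- If `F : ℝⁿ → ℝⁿ` (n ≥ 2) is `C¹`, no complex eigenvalue of `JF(x)` is zero
for any `x`, and there is `ε > 0` such that every eigenvalue of `JF(x)+JF(x)ᵀ` is greater
than `ε` for every `x`, then `F` is injective. -/
theorem injective_of_nonzero_spec_and_symmetric_spec_gt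
    {n : ℕ} (hn : 2 ≤ n) (F : (Fin n → ℝ) → (Fin n → ℝ)) (hF : ContDiff ℝ 1 F)
    (hspec : ∀ x : Fin n → ℝ, ∀ μ : ℂ, HasComplexEigenvalue (jacobianMatrix F x) μ → μ ≠ 0)
    (hsym : ∃ ε > (0 : ℝ), ∀ x : Fin n → ℝ, ∀ μ : ℝ,
        HasRealEigenvalue (jacobianMatrix F x + (jacobianMatrix F x)ᵀ) μ → ε < μ) :
    Function.Injective F :=
  injective_of_nonzero_spec_and_symmetric_spec_gt_general F hF hsym
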